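/- For b, c ∈ k, the left Λ-module M(1,b,c) is reflexive (i.e., the canonical evaluation map M(1,b,c) → M(1,b,c)** is bijective) if and only if b ≠ −q and b ≠ −q². -/

import Mathlib

open CategoryTheory Limits Opposite

/-- The algebra `Λ = Λ(q)` of Ringel–Zhang: a `k`-algebra with distinguished elements
`x, y, z` satisfying the defining relations
`x² = y² = z² = 0`, `yz = 0`, `xy + q·yx = 0`, `xz = zx`, `zy = zx`,
and admitting the `k`-basis `{1, x, y, z, yx, zx}`.
Any such algebra is canonically isomorphic to the quotient of the free algebra
`k⟨x,y,z⟩` by the two-sided ideal generated by these relations. -/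
structure LambdaAlg (k : Type) [Field k] (q : k) (Λ : Type) [Ring Λ] [Algebra k Λ] :
    Type where
  x : Λ
  y : Λ
  z : Λ
  hxx : x * x = 0
  hyy : y * y = 0
  hzz : z * z = 0
  hyz : y * z = 0
  hxy : x * y + q • (y * x) = 0
  hxz : x * z - z * x = 0
  hzy : z * y - z * x = 0
  basis : Module.Basis (Fin 6) k Λ
  hb0 : basis 0 = 1
  hb1 : basis 1 = x
  hb2 : basis 2 = y
  hb3 : basis 3 = z
  hb4 : basis 4 = y * x
  hb5 : basis 5 = z * x

namespace LambdaAlg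

variable {k : Type} [Field k] {q : k} {Λ : Type} [Ring Λ] [Algebra k Λ]

/-- The element `ax + by + cz` of `Λ`. -/
def w (D : LambdaAlg k q Λ) (a b c : k) : Λ := a • D.x + b • D.y + c • D.z

/-- The left ideal `U(a,b,c) = Λ(ax+by+cz) + Λ·yx + Λ·zx` of `Λ`. -/
def U (D : LambdaAlg k q Λ) (a b c : k) : Submodule Λ Λ :=
  Submodule.span Λ {D.w a b c, D.y * D.x, D.z * D.x}

/-- The left `Λ`-module `M(a,b,c) = Λ/U(a,b,c)`. -/
abbrev M (D : LambdaAlg k q Λ) (a b c : k) : Type := Λ ⧸ D.U a b c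

/-- The right ideal `U′(a,b,c) = (ax+by+cz)Λ + yx·Λ + zx·Λ` of `Λ`,
viewed as a `Λᵐᵒᵖ`-submodule of `Λ`. -/
def U' (D : LambdaAlg k q Λ) (a b c : k) : Submodule Λᵐᵒᵖ Λ :=
  Submodule.span Λᵐᵒᵖ {D.w a b c, D.y * D.x, D.z * D.x}

/-- The right `Λ`-module `M′(a,b,c) = Λ/U′(a,b,c)` (a module over `Λᵐᵒᵖ`). -/
abbrev M' (D : LambdaAlg k q Λ) (a b c : k) : Type := Λ ⧸ D.U' a b c

/-- The `k`-subspace `{m ∈ M : x·m = y·m = z·m = 0}` of a left `Λ`-module `M`;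
since `x, y, z` generate `rad Λ` and every simple `Λ`-module is isomorphic to `k`,
this is the socle of `M`. -/
def ann (D : LambdaAlg k q Λ) (M : Type) [AddCommGroup M] [Module k M] [Module Λ M]
    [IsScalarTower k Λ M] : Submodule k M where
  carrier := {m | D.x • m = 0 ∧ D.y • m = 0 ∧ D.z • m = 0}
  add_mem' := by
    rintro a b ⟨h1, h2, h3⟩ ⟨g1, g2, g3⟩
    simp [smul_add, h1, h2, h3, g1, g2, g3]
  zero_mem' := by simp
  smul_mem' := by
    rintro a m ⟨h1, h2, h3⟩
    refine ⟨?_, ?_, ?_⟩ <;> rw [smul_comm] <;> simp [h1, h2, h3]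

/-- The submodule `(rad Λ)·M = x·M + y·M + z·M` of a left `Λ`-module `M`. -/
def radM (D : LambdaAlg k q Λ) (M : Type) [AddCommGroup M] [Module Λ M] :
    Submodule Λ M :=
  Submodule.span Λ
    (Set.range (fun m : M => D.x • m) ∪ Set.range (fun m : M => D.y • m) ∪
      Set.range (fun m : M => D.z • m))

end LambdaAlg

/-- A module is indecomposable if it is nonzero and is not the direct sum of two
nonzero submodules. -/
def IsIndecomposable (R : Type) [Ring R] (M : Type) [AddCommGroup M] [Module R M] :
    Prop :=
  Nontrivial M ∧
    ∀ N₁ N₂ : Submodule R M, N₁ ⊓ N₂ = ⊥ → N₁ ⊔ N₂ = ⊤ → N₁ = ⊥ ∨ N₂ = ⊥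

/-- A module is torsionless if it admits an injective linear map into a finite free
module. -/
def IsTorsionless (R : Type) [Ring R] (M : Type) [AddCommGroup M] [Module R M] : Prop :=
  ∃ (n : ℕ) (f : M →ₗ[R] (Fin n → R)), Function.Injective f

/-- The canonical evaluation map `M → M** = Hom_{Λᵒᵖ}(Hom_Λ(M, Λ), Λ)`,
sending `m` to `f ↦ f m`. -/
def evalMap (Λ : Type) [Ring Λ] (M : Type) [AddCommGroup M] [Module Λ M] :
    M → ((M →ₗ[Λ] Λ) →ₗ[Λᵐᵒᵖ] Λ) := fun m =>
  { toFun := fun f => f m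
    map_add' := fun _ _ => rfl
    map_smul' := fun _ _ => rfl }

/-- The transformation `ω′(a,b,c) = (a, q⁻¹b, −((a+q⁻¹b)/a)·c)` on triples. -/
def omegaPrime {k : Type} [Field k] (q : k) (t : k × k × k) : k × k × k :=
  (t.1, q⁻¹ * t.2.1, -((t.1 + q⁻¹ * t.2.1) / t.1) * t.2.2)

/-!
Since `M = Λ/U` is cyclic, `f ↦ f(1̄)` identifies `M*` with the right annihilator of `U`. For
`U = U(1,b,c)` this is `λΛ` with `λ = qx + by − c(q+b)z`, so `M*` is generated by
`ρ : ū ↦ uλ`, and a functional on `M*` is determined by its value `ν` at `ρ`; such `ν` occur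
exactly when the right annihilator of `ν` contains that of `λ`. Hence the evaluation map is
injective iff the left annihilator of `λ` is `U`, and surjective iff every such `ν` lies in
`Λλ`. The first fails exactly for `b = −q`, where `zλ = 0` but `z ∉ U`. The second fails for
`b = −q²`, where `ν = z` works; otherwise `yx` and `q³x + qby + c(q+b)(q²+b)z` annihilate `λ`
on the right, and this forces `ν ∈ Λλ`.
-/

section EvalMap

variable {R M : Type} [Ring R] [AddCommGroup M] [Module R M]

theorem exists_dual_apply_eq {f₀ : M →ₗ[R] R} (hgen : Rᵐᵒᵖ ∙ f₀ = ⊤) {ν : R}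
    (hν : ∀ a : Rᵐᵒᵖ, a • f₀ = 0 → a • ν = 0) :
    ∃ g : (M →ₗ[R] R) →ₗ[Rᵐᵒᵖ] R, g f₀ = ν := by
  let e := (Ideal.quotTorsionOfEquivSpanSingleton Rᵐᵒᵖ _ f₀).trans
    ((LinearEquiv.ofEq _ _ hgen).trans Submodule.topEquiv)
  have he : e.symm f₀ = Submodule.Quotient.mk 1 := by
    rw [LinearEquiv.symm_apply_eq]
    ext1
    simp [e, Ideal.quotTorsionOfEquivSpanSingleton_apply_mk]
  refine ⟨(Submodule.liftQ _ (LinearMap.toSpanSingleton Rᵐᵒᵖ R ν) ?_) ∘ₗ e.symm.toLinearMap, ?_⟩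
  · intro a ha
    exact hν a ((Ideal.mem_torsionOf_iff _ _).1 ha)
  · rw [LinearMap.comp_apply, LinearEquiv.coe_coe, he]
    exact one_smul Rᵐᵒᵖ ν

theorem evalMap_injective_iff_of_span_eq_top {f₀ : M →ₗ[R] R} (hgen : Rᵐᵒᵖ ∙ f₀ = ⊤) :
    Function.Injective (evalMap R M) ↔ Function.Injective f₀ := by
  refine ⟨fun h m₁ m₂ hm => h (LinearMap.ext fun f => ?_),
    fun h m₁ m₂ hm => h (LinearMap.congr_fun hm f₀)⟩
  obtain ⟨a, rfl⟩ := (Submodule.span_singleton_eq_top_iff _ _).1 hgen f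
  simp [evalMap, hm]

theorem evalMap_surjective_iff_of_span_eq_top {f₀ : M →ₗ[R] R} (hgen : Rᵐᵒᵖ ∙ f₀ = ⊤) :
    Function.Surjective (evalMap R M) ↔
      ∀ ν : R, (∀ a : Rᵐᵒᵖ, a • f₀ = 0 → a • ν = 0) → ν ∈ LinearMap.range f₀ := by
  constructor
  · intro h ν hν
    obtain ⟨g, rfl⟩ := exists_dual_apply_eq hgen hν
    obtain ⟨m, rfl⟩ := h g
    exact ⟨m, rfl⟩
  · intro h g
    obtain ⟨m, hm⟩ := h (g f₀) fun a ha => by rw [← map_smul, ha, map_zero]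
    refine ⟨m, LinearMap.ext fun f => ?_⟩
    obtain ⟨a, rfl⟩ := (Submodule.span_singleton_eq_top_iff _ _).1 hgen f
    simp [evalMap, ← hm]

end EvalMap

section CyclicQuotient

variable {R : Type} [Ring R] {I : Submodule R R} {μ : R}

def quotMulRight (I : Submodule R R) (μ : R) (hμ : ∀ u ∈ I, u * μ = 0) : (R ⧸ I) →ₗ[R] R :=
  I.liftQ (LinearMap.toSpanSingleton R R μ) hμ

@[simp]
theorem quotMulRight_mk (hμ : ∀ u ∈ I, u * μ = 0) (u : R) :
    quotMulRight I μ hμ (Submodule.Quotient.mk u) = u * μ :=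
  rfl

theorem op_smul_quotMulRight_eq_zero_iff (hμ : ∀ u ∈ I, u * μ = 0) (v : R) :
    MulOpposite.op v • quotMulRight I μ hμ = 0 ↔ μ * v = 0 := by
  refine ⟨fun h => ?_, fun h => Submodule.linearMap_qext _ (LinearMap.ext_ring ?_)⟩
  · simpa using LinearMap.congr_fun h (Submodule.Quotient.mk 1)
  · simp [h]

theorem span_quotMulRight_eq_top (hμ : ∀ u ∈ I, u * μ = 0)
    (hdual : ∀ ν : R, (∀ u ∈ I, u * ν = 0) → ∃ v, ν = μ * v) :
    Rᵐᵒᵖ ∙ quotMulRight I μ hμ = ⊤ := by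
  refine (Submodule.span_singleton_eq_top_iff _ _).2 fun f => ?_
  obtain ⟨v, hv⟩ := hdual (f (Submodule.Quotient.mk 1)) fun u hu => by
    rw [← smul_eq_mul, ← map_smul, ← Submodule.Quotient.mk_smul, smul_eq_mul, mul_one,
      (Submodule.Quotient.mk_eq_zero I).2 hu, map_zero]
  refine ⟨MulOpposite.op v, Submodule.linearMap_qext _ (LinearMap.ext_ring ?_)⟩
  simp [hv]

theorem evalMap_quot_injective_iff (hμ : ∀ u ∈ I, u * μ = 0)
    (hdual : ∀ ν : R, (∀ u ∈ I, u * ν = 0) → ∃ v, ν = μ * v) :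
    Function.Injective (evalMap R (R ⧸ I)) ↔ ∀ u, u * μ = 0 → u ∈ I := by
  rw [evalMap_injective_iff_of_span_eq_top (span_quotMulRight_eq_top hμ hdual),
    injective_iff_map_eq_zero]
  refine ⟨fun h u hu => (Submodule.Quotient.mk_eq_zero I).1 (h _ hu), fun h m hm => ?_⟩
  obtain ⟨u, rfl⟩ := Submodule.Quotient.mk_surjective I m
  exact (Submodule.Quotient.mk_eq_zero I).2 (h u hm)

theorem evalMap_quot_surjective_iff (hμ : ∀ u ∈ I, u * μ = 0)
    (hdual : ∀ ν : R, (∀ u ∈ I, u * ν = 0) → ∃ v, ν = μ * v) :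
    Function.Surjective (evalMap R (R ⧸ I)) ↔
      ∀ ν : R, (∀ v, μ * v = 0 → ν * v = 0) → ∃ u, u * μ = ν := by
  rw [evalMap_surjective_iff_of_span_eq_top (span_quotMulRight_eq_top hμ hdual)]
  refine forall_congr' fun ν => imp_congr ⟨fun h v hv => ?_, fun h a ha => ?_⟩ ?_
  · simpa using h (MulOpposite.op v) ((op_smul_quotMulRight_eq_zero_iff hμ v).2 hv)
  · simpa using h a.unop ((op_smul_quotMulRight_eq_zero_iff hμ a.unop).1 ha)
  · rw [LinearMap.mem_range, (Submodule.Quotient.mk_surjective I).exists]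
    simp

end CyclicQuotient

namespace LambdaAlg

variable {k : Type} [Field k] {q : k} {Λ : Type} [Ring Λ] [Algebra k Λ] (D : LambdaAlg k q Λ)

theorem x_mul_y : D.x * D.y = -q • (D.y * D.x) :=
  neg_smul q (D.y * D.x) ▸ eq_neg_of_add_eq_zero_left D.hxy

theorem x_mul_z : D.x * D.z = D.z * D.x := sub_eq_zero.1 D.hxz

theorem z_mul_y : D.z * D.y = D.z * D.x := sub_eq_zero.1 D.hzy

theorem x_mul_yx : D.x * (D.y * D.x) = 0 := by
  rw [← mul_assoc, x_mul_y, smul_mul_assoc, mul_assoc, D.hxx, mul_zero, smul_zero]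

theorem y_mul_yx : D.y * (D.y * D.x) = 0 := by rw [← mul_assoc, D.hyy, zero_mul]

theorem z_mul_yx : D.z * (D.y * D.x) = 0 := by
  rw [← mul_assoc, z_mul_y, mul_assoc, D.hxx, mul_zero]

theorem x_mul_zx : D.x * (D.z * D.x) = 0 := by
  rw [← mul_assoc, x_mul_z, mul_assoc, D.hxx, mul_zero]

theorem y_mul_zx : D.y * (D.z * D.x) = 0 := by rw [← mul_assoc, D.hyz, zero_mul]

theorem z_mul_zx : D.z * (D.z * D.x) = 0 := by rw [← mul_assoc, D.hzz, zero_mul]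

def ofCoeffs (a₀ a₁ a₂ a₃ a₄ a₅ : k) : Λ :=
  a₀ • 1 + a₁ • D.x + a₂ • D.y + a₃ • D.z + a₄ • (D.y * D.x) + a₅ • (D.z * D.x)

theorem ofCoeffs_eq_sum (a₀ a₁ a₂ a₃ a₄ a₅ : k) :
    D.ofCoeffs a₀ a₁ a₂ a₃ a₄ a₅ = ∑ i, ![a₀, a₁, a₂, a₃, a₄, a₅] i • D.basis i := by
  simp [ofCoeffs, Fin.sum_univ_six, D.hb0, D.hb1, D.hb2, D.hb3, D.hb4, D.hb5]

theorem exists_eq_ofCoeffs (u : Λ) : ∃ a₀ a₁ a₂ a₃ a₄ a₅, u = D.ofCoeffs a₀ a₁ a₂ a₃ a₄ a₅ := by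
  refine ⟨D.basis.repr u 0, D.basis.repr u 1, D.basis.repr u 2, D.basis.repr u 3,
    D.basis.repr u 4, D.basis.repr u 5, ?_⟩
  simpa [ofCoeffs_eq_sum, Fin.sum_univ_six] using (D.basis.sum_repr u).symm.trans
    (Fin.sum_univ_six _)

theorem ofCoeffs_inj {a₀ a₁ a₂ a₃ a₄ a₅ b₀ b₁ b₂ b₃ b₄ b₅ : k} :
    D.ofCoeffs a₀ a₁ a₂ a₃ a₄ a₅ = D.ofCoeffs b₀ b₁ b₂ b₃ b₄ b₅ ↔
      a₀ = b₀ ∧ a₁ = b₁ ∧ a₂ = b₂ ∧ a₃ = b₃ ∧ a₄ = b₄ ∧ a₅ = b₅ := by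
  simp only [ofCoeffs_eq_sum, ← D.basis.equivFun_symm_apply, EmbeddingLike.apply_eq_iff_eq]
  simp [funext_iff, Fin.forall_fin_succ]

theorem ofCoeffs_zero : D.ofCoeffs 0 0 0 0 0 0 = 0 := by simp [ofCoeffs]

theorem ofCoeffs_eq_zero {a₀ a₁ a₂ a₃ a₄ a₅ : k} :
    D.ofCoeffs a₀ a₁ a₂ a₃ a₄ a₅ = 0 ↔
      a₀ = 0 ∧ a₁ = 0 ∧ a₂ = 0 ∧ a₃ = 0 ∧ a₄ = 0 ∧ a₅ = 0 := by
  rw [← D.ofCoeffs_zero, ofCoeffs_inj]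

theorem ofCoeffs_mul_ofCoeffs (a₀ a₁ a₂ a₃ a₄ a₅ b₀ b₁ b₂ b₃ b₄ b₅ : k) :
    D.ofCoeffs a₀ a₁ a₂ a₃ a₄ a₅ * D.ofCoeffs b₀ b₁ b₂ b₃ b₄ b₅ =
      D.ofCoeffs (a₀ * b₀) (a₀ * b₁ + a₁ * b₀) (a₀ * b₂ + a₂ * b₀) (a₀ * b₃ + a₃ * b₀)
        (a₀ * b₄ + a₄ * b₀ + a₂ * b₁ - q * (a₁ * b₂))
        (a₀ * b₅ + a₅ * b₀ + a₁ * b₃ + a₃ * b₁ + a₃ * b₂) := by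
  simp only [ofCoeffs, mul_add, add_mul, smul_mul_assoc, mul_smul_comm, smul_smul, one_mul,
    mul_one, mul_assoc, D.hxx, D.hyy, D.hzz, D.hyz, x_mul_y, x_mul_z, z_mul_y, x_mul_yx,
    y_mul_yx, z_mul_yx, x_mul_zx, y_mul_zx, z_mul_zx, smul_zero, mul_zero]
  module

theorem w_eq_ofCoeffs (a b c : k) : D.w a b c = D.ofCoeffs 0 a b c 0 0 := by
  simp [w, ofCoeffs]

theorem z_eq_ofCoeffs : D.z = D.ofCoeffs 0 0 0 1 0 0 := by simp [ofCoeffs]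

theorem yx_eq_ofCoeffs : D.y * D.x = D.ofCoeffs 0 0 0 0 1 0 := by simp [ofCoeffs]

theorem zx_eq_ofCoeffs : D.z * D.x = D.ofCoeffs 0 0 0 0 0 1 := by simp [ofCoeffs]

def dualGen (b c : k) : Λ := D.w q b (-(c * (q + b)))

theorem dualGen_eq_ofCoeffs (b c : k) :
    D.dualGen b c = D.ofCoeffs 0 q b (-(c * (q + b))) 0 0 :=
  D.w_eq_ofCoeffs _ _ _

variable {b c : k}

theorem mem_U_iff {u : Λ} :
    u ∈ D.U 1 b c ↔ ∃ s t r, u = D.ofCoeffs 0 s (b * s) (c * s) t r := by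
  constructor
  · intro hu
    induction hu using Submodule.span_induction with
    | mem u hu =>
      rcases hu with rfl | rfl | rfl
      · exact ⟨1, 0, 0, by simp [w_eq_ofCoeffs]⟩
      · exact ⟨0, 1, 0, by simp [yx_eq_ofCoeffs]⟩
      · exact ⟨0, 0, 1, by simp [zx_eq_ofCoeffs]⟩
    | zero => exact ⟨0, 0, 0, by simp [ofCoeffs]⟩
    | add u v _ _ hu hv =>
      obtain ⟨s, t, r, rfl⟩ := hu
      obtain ⟨s', t', r', rfl⟩ := hv
      exact ⟨s + s', t + t', r + r', by simp only [ofCoeffs]; module⟩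
    | smul a u _ hu =>
      obtain ⟨s, t, r, rfl⟩ := hu
      obtain ⟨a₀, a₁, a₂, a₃, a₄, a₅, rfl⟩ := D.exists_eq_ofCoeffs a
      refine ⟨a₀ * s, a₀ * t + a₂ * s - q * (a₁ * (b * s)), a₀ * r + a₁ * (c * s) + a₃ * s +
        a₃ * (b * s), ?_⟩
      rw [smul_eq_mul, ofCoeffs_mul_ofCoeffs]
      congr 1 <;> ring
  · rintro ⟨s, t, r, rfl⟩
    have hsum : D.ofCoeffs 0 s (b * s) (c * s) t r =
        s • D.w 1 b c + t • (D.y * D.x) + r • (D.z * D.x) := by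
      simp only [w, ofCoeffs]
      module
    rw [hsum]
    refine add_mem (add_mem ?_ ?_) ?_ <;>
      exact Submodule.smul_of_tower_mem _ _ (Submodule.subset_span (by simp))

theorem U_mul_dualGen : ∀ u ∈ D.U 1 b c, u * D.dualGen b c = 0 := by
  intro u hu
  obtain ⟨s, t, r, rfl⟩ := D.mem_U_iff.1 hu
  rw [dualGen_eq_ofCoeffs, ofCoeffs_mul_ofCoeffs, ofCoeffs_eq_zero]
  refine ⟨?_, ?_, ?_, ?_, ?_, ?_⟩ <;> ring

theorem exists_eq_dualGen_mul (hq : q ≠ 0) :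
    ∀ ν : Λ, (∀ u ∈ D.U 1 b c, u * ν = 0) → ∃ v, ν = D.dualGen b c * v := by
  intro ν hν
  have hw := hν (D.w 1 b c) (Submodule.subset_span (by simp))
  obtain ⟨n₀, n₁, n₂, n₃, n₄, n₅, rfl⟩ := D.exists_eq_ofCoeffs ν
  rw [w_eq_ofCoeffs, ofCoeffs_mul_ofCoeffs, ofCoeffs_eq_zero] at hw
  simp only [zero_mul, one_mul, zero_add] at hw
  obtain ⟨-, h₀, -, -, h₄, h₅⟩ := hw
  refine ⟨D.ofCoeffs (n₁ / q) 0 (-n₄ / q ^ 2) ((n₅ - c * (q + b) * n₄ / q ^ 2) / q) 0 0, ?_⟩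
  rw [dualGen_eq_ofCoeffs, ofCoeffs_mul_ofCoeffs]
  simp only [mul_zero, zero_mul, add_zero, zero_add]
  congr 1
  · field_simp
  · field_simp
    linear_combination -h₄
  · field_simp
    linear_combination q * h₅ + c * h₄
  · field_simp
    ring
  · field_simp
    ring

theorem mem_U_of_mul_dualGen_eq_zero (hq : q ≠ 0) (hb : b ≠ -q) {u : Λ}
    (hu : u * D.dualGen b c = 0) : u ∈ D.U 1 b c := by
  obtain ⟨u₀, u₁, u₂, u₃, u₄, u₅, rfl⟩ := D.exists_eq_ofCoeffs u
  rw [dualGen_eq_ofCoeffs, ofCoeffs_mul_ofCoeffs, ofCoeffs_eq_zero] at hu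
  simp only [mul_zero, zero_add, add_zero] at hu
  obtain ⟨-, h₁, -, -, h₄, h₅⟩ := hu
  have hqb : q + b ≠ 0 := fun h => hb (by linear_combination h)
  refine D.mem_U_iff.2 ⟨u₁, u₄, u₅, ?_⟩
  rw [ofCoeffs_inj]
  refine ⟨(mul_eq_zero.1 h₁).resolve_right hq, rfl, ?_, ?_, rfl, rfl⟩
  · exact mul_left_cancel₀ hq (by linear_combination h₄)
  · exact mul_left_cancel₀ hqb (by linear_combination h₅)

theorem z_mul_dualGen_neg : D.z * D.dualGen (-q) c = 0 := by
  rw [z_eq_ofCoeffs, dualGen_eq_ofCoeffs, ofCoeffs_mul_ofCoeffs, ofCoeffs_eq_zero]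
  refine ⟨?_, ?_, ?_, ?_, ?_, ?_⟩ <;> ring

theorem z_not_mem_U : D.z ∉ D.U 1 b c := by
  intro hz
  obtain ⟨s, t, r, h⟩ := D.mem_U_iff.1 hz
  rw [z_eq_ofCoeffs, ofCoeffs_inj] at h
  obtain ⟨-, rfl, -, h, -⟩ := h
  simp at h

theorem exists_mul_dualGen_eq (hq : q ≠ 0) (hb₁ : b ≠ -q) (hb₂ : b ≠ -q ^ 2) (ν : Λ)
    (hν : ∀ v, D.dualGen b c * v = 0 → ν * v = 0) : ∃ u, u * D.dualGen b c = ν := by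
  have hqb : q + b ≠ 0 := fun h => hb₁ (by linear_combination h)
  have hq2b : q ^ 2 + b ≠ 0 := fun h => hb₂ (by linear_combination h)
  have hyx := hν (D.y * D.x) (by
    rw [yx_eq_ofCoeffs, dualGen_eq_ofCoeffs, ofCoeffs_mul_ofCoeffs, ofCoeffs_eq_zero]
    refine ⟨?_, ?_, ?_, ?_, ?_, ?_⟩ <;> ring)
  have hw := hν (D.w (q ^ 3) (q * b) (c * (q + b) * (q ^ 2 + b))) (by
    rw [w_eq_ofCoeffs, dualGen_eq_ofCoeffs, ofCoeffs_mul_ofCoeffs, ofCoeffs_eq_zero]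
    refine ⟨?_, ?_, ?_, ?_, ?_, ?_⟩ <;> ring)
  obtain ⟨n₀, n₁, n₂, n₃, n₄, n₅, rfl⟩ := D.exists_eq_ofCoeffs ν
  rw [yx_eq_ofCoeffs, ofCoeffs_mul_ofCoeffs, ofCoeffs_eq_zero] at hyx
  rw [w_eq_ofCoeffs, ofCoeffs_mul_ofCoeffs, ofCoeffs_eq_zero] at hw
  simp only [mul_zero, zero_add, add_zero, mul_one, sub_zero] at hyx hw
  obtain ⟨-, -, -, -, h₀, -⟩ := hyx
  obtain ⟨-, -, -, -, h₄, h₅⟩ := hw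
  have h₂ : q * n₂ = b * n₁ := mul_left_cancel₀ (pow_ne_zero 2 hq) (by linear_combination h₄)
  have h₃ : q * n₃ = -(c * (q + b)) * n₁ := mul_left_cancel₀ hq2b (by linear_combination h₅)
  refine ⟨D.ofCoeffs (n₁ / q) 0 (n₄ / q) (n₅ / (q + b)) 0 0, ?_⟩
  rw [dualGen_eq_ofCoeffs, ofCoeffs_mul_ofCoeffs]
  simp only [mul_zero, zero_mul, add_zero, zero_add, sub_zero]
  congr 1
  · exact h₀.symm
  · exact div_mul_cancel₀ n₁ hq
  · rw [div_mul_eq_mul_div, div_eq_iff hq]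
    linear_combination -h₂
  · rw [div_mul_eq_mul_div, div_eq_iff hq]
    linear_combination -h₃
  · exact div_mul_cancel₀ n₄ hq
  · rw [← mul_add, div_mul_cancel₀ n₅ hqb]

theorem z_mul_eq_zero_of_dualGen_mul_eq_zero (hq : q ≠ 0) {v : Λ}
    (hv : D.dualGen (-q ^ 2) c * v = 0) : D.z * v = 0 := by
  obtain ⟨v₀, v₁, v₂, v₃, v₄, v₅, rfl⟩ := D.exists_eq_ofCoeffs v
  rw [dualGen_eq_ofCoeffs, ofCoeffs_mul_ofCoeffs, ofCoeffs_eq_zero] at hv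
  simp only [zero_mul, zero_add, add_zero] at hv
  obtain ⟨-, h₁, -, -, h₄, -⟩ := hv
  rw [z_eq_ofCoeffs, ofCoeffs_mul_ofCoeffs, ofCoeffs_eq_zero]
  simp only [zero_mul, one_mul, zero_add, mul_zero, sub_zero, true_and]
  exact ⟨(mul_eq_zero.1 h₁).resolve_left hq,
    mul_left_cancel₀ (pow_ne_zero 2 hq) (by linear_combination -h₄)⟩

theorem mul_dualGen_ne_z (hq : q ≠ 0) (u : Λ) : u * D.dualGen b c ≠ D.z := by
  obtain ⟨u₀, u₁, u₂, u₃, u₄, u₅, rfl⟩ := D.exists_eq_ofCoeffs u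
  rw [dualGen_eq_ofCoeffs, ofCoeffs_mul_ofCoeffs, z_eq_ofCoeffs, ne_eq, ofCoeffs_inj]
  rintro ⟨-, h₁, -, h₃, -⟩
  have hu₀ : u₀ = 0 := by simpa [hq] using h₁
  simp [hu₀] at h₃

end LambdaAlg

/-- `M(1,b,c)` is reflexive (the canonical evaluation map `M → M**` is bijective)
if and only if `b ≠ −q` and `b ≠ −q²`. -/
theorem statement14 (k : Type) [Field k] (q : k) (hq : q ≠ 0)
    (Λ : Type) [Ring Λ] [Algebra k Λ] (D : LambdaAlg k q Λ) (b c : k) :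
    Function.Bijective (evalMap Λ (D.M 1 b c)) ↔ b ≠ -q ∧ b ≠ -q ^ 2 := by
  have hdual := D.exists_eq_dualGen_mul (b := b) (c := c) hq
  rw [Function.Bijective, evalMap_quot_injective_iff D.U_mul_dualGen hdual,
    evalMap_quot_surjective_iff D.U_mul_dualGen hdual]
  constructor
  · rintro ⟨hinj, hsurj⟩
    refine ⟨?_, ?_⟩
    · rintro rfl
      exact D.z_not_mem_U (hinj D.z D.z_mul_dualGen_neg)
    · rintro rfl
      obtain ⟨u, hu⟩ := hsurj D.z fun v => D.z_mul_eq_zero_of_dualGen_mul_eq_zero hq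
      exact D.mul_dualGen_ne_z hq u hu
  · rintro ⟨hb₁, hb₂⟩
    exact ⟨fun u => D.mem_U_of_mul_dualGen_eq_zero hq hb₁,
      D.exists_mul_dualGen_eq hq hb₁ hb₂⟩
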